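/- arXiv:2002.08234 — 7 statements merged into one kernel-verified Lean document; each statement's English description precedes it below -/
import Mathlib

section
/- Let (F, G, η, ε) : C → X be an adjunction F ⊣ G, where C has pullbacks, such that every unit component η_C : C ⟶ GF(C) is a pullback stable epimorphism (i.e., the pullback of η_C along any morphism is again an epimorphism) and every counit component ε_X : FG(X) ⟶ X is an epimorphism. Then F is a weak fibration. -/
open CategoryTheory Limits

/-- A morphism `e : A ⟶ B` is a pullback stable epimorphism if for every morphism
`u : X ⟶ B` the pullback projection `A ×_B X ⟶ X` of `e` along `u` is an epimorphism. -/
def IsStableEpi {C : Type*} [Category C] [HasPullbacks C] {A B : C} (e : A ⟶ B) : Prop :=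
  ∀ ⦃X : C⦄ (u : X ⟶ B), Epi (pullback.snd e u)

/-- A functor `F : C ⥤ X` is a weak fibration if for every object `c` of `C` and every
morphism `u : x ⟶ F c` there exist `f : U ⟶ c` in `C` and an epimorphism `φ : F U ⟶ x`
with `F f = φ ≫ u`. -/
def IsWeakFibration {C : Type*} [Category C] {X : Type*} [Category X] (F : C ⥤ X) : Prop :=
  ∀ (c : C) ⦃x : X⦄ (u : x ⟶ F.obj c), ∃ (U : C) (f : U ⟶ c) (φ : F.obj U ⟶ x),
    Epi φ ∧ F.map f = φ ≫ u

theorem CategoryTheory.Adjunction.map_eq_of_comp_unit_eq {C : Type*} [Category C] {X : Type*}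
    [Category X] {F : C ⥤ X} {G : X ⥤ C} (adj : F ⊣ G) {U c : C} {x : X}
    {f : U ⟶ c} {g : U ⟶ G.obj x} {u : x ⟶ F.obj c}
    (h : f ≫ adj.unit.app c = g ≫ G.map u) :
    F.map f = (F.map g ≫ adj.counit.app x) ≫ u := by
  apply (adj.homEquiv U (F.obj c)).injective
  simp [Adjunction.homEquiv_unit, h]

/-- If `(F, G, η, ε)` is an adjunction whose unit components are pullback stable
epimorphisms and whose counit components are epimorphisms, then `F` is a weak fibration. -/
theorem isWeakFibration_of_adjunction {C : Type*} [Category C] {X : Type*} [Category X]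
    [HasPullbacks C] (F : C ⥤ X) (G : X ⥤ C) (adj : F ⊣ G)
    (hη : ∀ c : C, IsStableEpi (adj.unit.app c))
    (hε : ∀ x : X, Epi (adj.counit.app x)) :
    IsWeakFibration F := by
  intro c x u
  -- Pull `η_c` back along `G u`; the transpose of the projection to `G x` is the required `φ`.
  have : F.PreservesEpimorphisms := F.preservesEpimorphisms_of_adjunction adj
  have : Epi (pullback.snd (adj.unit.app c) (G.map u)) := hη c (G.map u)
  exact ⟨pullback (adj.unit.app c) (G.map u), pullback.fst _ _,
    F.map (pullback.snd _ _) ≫ adj.counit.app x, epi_comp _ _,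
    adj.map_eq_of_comp_unit_eq pullback.condition⟩
end

section
/- If F : C ⥤ X is a weak opfibration that preserves monomorphisms and reflects monomorphisms, then a morphism m in C is an essential monomorphism if and only if F(m) is an essential monomorphism in X. -/
open CategoryTheory Limits

/-- A morphism `m` is an essential monomorphism if it is a monomorphism and every
morphism `f` such that `m ≫ f` is a monomorphism is itself a monomorphism. -/
def IsEssentialMono {C : Type*} [CategoryTheory.Category C] {S A : C} (m : S ⟶ A) : Prop :=
  CategoryTheory.Mono m ∧
    ∀ ⦃B : C⦄ (f : A ⟶ B), CategoryTheory.Mono (m ≫ f) → CategoryTheory.Mono f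

/-- A functor `F : C ⥤ X` is a weak opfibration if for every object `c` of `C` and every
morphism `v : F c ⟶ y` there exist `g : c ⟶ V` in `C` and a monomorphism `ψ : y ⟶ F V`
with `F g = v ≫ ψ`. -/
def IsWeakOpfibration {C : Type*} [Category C] {X : Type*} [Category X] (F : C ⥤ X) : Prop :=
  ∀ (c : C) ⦃y : X⦄ (v : F.obj c ⟶ y), ∃ (V : C) (g : c ⟶ V) (ψ : y ⟶ F.obj V),
    Mono ψ ∧ F.map g = v ≫ ψ

/-- If `F` is a weak opfibration that preserves and reflects monomorphisms, then a
morphism `m` is an essential monomorphism if and only if `F.map m` is. -/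
theorem essentialMono_iff_of_weakOpfibration {C : Type*} [Category C] {X : Type*} [Category X]
    (F : C ⥤ X) [F.PreservesMonomorphisms] [F.ReflectsMonomorphisms]
    (hF : IsWeakOpfibration F) {S A : C} (m : S ⟶ A) :
    IsEssentialMono m ↔ IsEssentialMono (F.map m) := by
  constructor
  · rintro ⟨hm, hess⟩
    refine ⟨inferInstance, fun y f hf => ?_⟩
    obtain ⟨V, g, ψ, hψ, hFg⟩ := hF A f
    have h1 : Mono (F.map (m ≫ g)) := by
      rw [F.map_comp, hFg, ← Category.assoc]
      exact mono_comp _ _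
    have h2 : Mono (m ≫ g) := F.mono_of_mono_map h1
    have h3 : Mono g := hess g h2
    have h4 : Mono (f ≫ ψ) := hFg ▸ F.map_mono g
    exact mono_of_mono f ψ
  · rintro ⟨hm, hess⟩
    refine ⟨F.mono_of_mono_map hm, fun B f hf => ?_⟩
    have : Mono (F.map m ≫ F.map f) := by rw [← F.map_comp]; exact F.map_mono _
    exact F.mono_of_mono_map (hess (F.map f) this)
end

section
/- Let F : C ⥤ X be a faithful essential localization, with right adjoint G (unit η) and left adjoint H (counit θ of the adjunction H ⊣ F). Then for every object C of C, the unit component η_C : C ⟶ GF(C) and the counit component θ_C : HF(C) ⟶ C are bimorphisms, i.e., they are both monomorphisms and epimorphisms. -/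
/-!
Since `G` is fully faithful, the counit of `F ⊣ G` is invertible, so by a triangle identity
`F (η_C)` is invertible; in the adjoint triple `H ⊣ F ⊣ G` the functor `H` is then fully faithful
as well, and dually `F (θ_C)` is invertible. A faithful functor reflects monomorphisms and
epimorphisms, so `η_C` and `θ_C` are both.
-/

open CategoryTheory Limits

namespace CategoryTheory

variable {C D : Type*} [Category C] [Category D]

lemma Functor.mono_and_epi_of_isIso_map (F : C ⥤ D) [F.Faithful] {X Y : C} (f : X ⟶ Y)
    [IsIso (F.map f)] : Mono f ∧ Epi f :=
  ⟨F.mono_of_mono_map inferInstance, F.epi_of_epi_map inferInstance⟩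

lemma Adjunction.mono_and_epi_unit_app {L : C ⥤ D} {R : D ⥤ C} (h : L ⊣ R) [L.Faithful]
    [R.Full] [R.Faithful] (X : C) : Mono (h.unit.app X) ∧ Epi (h.unit.app X) :=
  L.mono_and_epi_of_isIso_map _

lemma Adjunction.mono_and_epi_counit_app {L : C ⥤ D} {R : D ⥤ C} (h : L ⊣ R) [R.Faithful]
    [L.Full] [L.Faithful] (Y : D) : Mono (h.counit.app Y) ∧ Epi (h.counit.app Y) :=
  R.mono_and_epi_of_isIso_map _

end CategoryTheory

theorem unit_counit_bimorphism_of_faithful_essentialLocalization_general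
    {C : Type*} [Category C] {X : Type*} [Category X]
    (F : C ⥤ X) (G : X ⥤ C) (H : X ⥤ C)
    (adj : F ⊣ G) [F.Faithful] [G.Full] [G.Faithful]
    (adj' : H ⊣ F) (c : C) :
    (Mono (adj.unit.app c) ∧ Epi (adj.unit.app c)) ∧
      (Mono (adj'.counit.app c) ∧ Epi (adj'.counit.app c)) := by
  have hH : H.FullyFaithful :=
    (Adjunction.Triple.mk adj' adj).fullyFaithfulEquiv.symm (.ofFullyFaithful G)
  have := hH.full
  have := hH.faithful
  exact ⟨adj.mono_and_epi_unit_app c, adj'.mono_and_epi_counit_app c⟩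

/-- For a faithful essential localization `F : C ⥤ X` (an adjunction `F ⊣ G` with `F`
faithful and preserving finite limits, `G` fully faithful, and a further left adjoint
`H ⊣ F`), every unit component `η_C : C ⟶ GF(C)` and every counit component
`θ_C : HF(C) ⟶ C` is a bimorphism, i.e. both a monomorphism and an epimorphism. -/
theorem unit_counit_bimorphism_of_faithful_essentialLocalization
    {C : Type*} [Category C] {X : Type*} [Category X]
    [HasFiniteLimits C] [HasFiniteLimits X]
    (F : C ⥤ X) (G : X ⥤ C) (H : X ⥤ C)
    (adj : F ⊣ G) [PreservesFiniteLimits F] [F.Faithful] [G.Full] [G.Faithful]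
    (adj' : H ⊣ F) (c : C) :
    (Mono (adj.unit.app c) ∧ Epi (adj.unit.app c)) ∧
      (Mono (adj'.counit.app c) ∧ Epi (adj'.counit.app c)) :=
  unit_counit_bimorphism_of_faithful_essentialLocalization_general F G H adj adj' c
end

section
/- Let F : C ⥤ X be a faithful essential localization. If C is balanced (every bimorphism in C is an isomorphism), then F is an equivalence of categories. -/
open CategoryTheory Limits

/-- If `F : C ⥤ X` is a faithful essential localization and `C` is balanced, then `F`
is an equivalence of categories. -/
theorem isEquivalence_of_faithful_essentialLocalization_of_balanced
    {C : Type*} [Category C] {X : Type*} [Category X]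
    [HasFiniteLimits C] [HasFiniteLimits X] [Balanced C]
    (F : C ⥤ X) (G : X ⥤ C) (H : X ⥤ C)
    (adj : F ⊣ G) [PreservesFiniteLimits F] [F.Faithful] [G.Full] [G.Faithful]
    (adj' : H ⊣ F) :
    F.IsEquivalence := by
  -- The counit is an iso since G is fully faithful.
  have hunit : ∀ c : C, IsIso (adj.unit.app c) := by
    intro c
    have h1 : F.map (adj.unit.app c) ≫ adj.counit.app (F.obj c) = 𝟙 _ :=
      adj.left_triangle_components c
    have : IsIso (F.map (adj.unit.app c)) := by
      exact IsIso.of_isIso_fac_right h1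
    have hm : Mono (adj.unit.app c) := F.mono_of_mono_map inferInstance
    have he : Epi (adj.unit.app c) := F.epi_of_epi_map inferInstance
    exact isIso_of_mono_of_epi _
  have : IsIso adj.unit := NatIso.isIso_of_isIso_app adj.unit
  have ff := adj.fullyFaithfulLOfIsIsoUnit
  have : F.Full := ff.full
  have : F.EssSurj := ⟨fun x => ⟨G.obj x, ⟨asIso (adj.counit.app x)⟩⟩⟩
  exact { }
end

section
/- In the category of sets (Type u), every essential monomorphism m : S ⟶ A is either an isomorphism, or else S is empty and A is a singleton (i.e., S is an initial object and A is a terminal object). -/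
open CategoryTheory Limits

universe u

namespace IsEssentialMono

variable {S A : Type u} {m : S ⟶ A}

theorem injective (h : IsEssentialMono m) : Function.Injective m :=
  (mono_iff_injective m).1 h.1

theorem injective_of_injective_comp (h : IsEssentialMono m) {B : Type u} (f : A → B)
    (hf : Function.Injective (f ∘ m)) : Function.Injective f :=
  (mono_iff_injective _).1 <| h.2 (TypeCat.ofHom f) <| (mono_iff_injective _).2 hf

theorem surjective [Nonempty S] (h : IsEssentialMono m) : Function.Surjective m := by
  classical
  intro a
  by_contra! ha
  obtain ⟨s⟩ := ‹Nonempty S›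
  -- Sending the missed point `a` to `m s` keeps `f ∘ m = m` injective but identifies `a`, `m s`.
  set f := Function.update id a (m s)
  have hfm : f ∘ m = m := funext fun x => Function.update_of_ne (ha x) _ _
  have hf : Function.Injective f :=
    h.injective_of_injective_comp f (by rw [hfm]; exact h.injective)
  exact ha s (hf (by simp [f, Function.update_of_ne (ha s)]))

theorem subsingleton [IsEmpty S] (h : IsEssentialMono m) : Subsingleton A :=
  ⟨fun a _ => h.injective_of_injective_comp (fun _ : A => a)
    (Function.injective_of_subsingleton _) rfl⟩

end IsEssentialMono

/-- In the category of sets, every essential monomorphism `m : S ⟶ A` is either an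
isomorphism, or else `S` is empty (an initial object) and `A` is a singleton (a terminal
object). -/
theorem essentialMono_in_types {S A : Type u} (m : S ⟶ A) (h : IsEssentialMono m) :
    IsIso m ∨ (IsEmpty S ∧ Nonempty A ∧ Subsingleton A) := by
  rcases isEmpty_or_nonempty S with hS | hS
  · rcases isEmpty_or_nonempty A with hA | hA
    · exact .inl <| (isIso_iff_bijective m).2 ⟨h.injective, isEmptyElim⟩
    · exact .inr ⟨hS, hA, h.subsingleton⟩
  · exact .inl <| (isIso_iff_bijective m).2 ⟨h.injective, h.surjective⟩
end

section
/- Let F : C ⥤ X be a faithful essential localization with right adjoint G and unit η, and assume that every monomorphism in X is split. Then for every object C of C, the unit component η_C : C ⟶ GF(C) is an injective envelope of C: η_C is an essential monomorphism and GF(C) is an injective object of C. In particular, C is an injective object if and only if η_C is an isomorphism. -/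
open CategoryTheory Limits

/-- Let `F : C ⥤ X` be a faithful essential localization with right adjoint `G` and unit
`η`, and assume that every monomorphism in `X` is split. Then for every object `c` of
`C`, the unit component `η_c : c ⟶ GF(c)` is an injective envelope of `c`: it is an
essential monomorphism into an injective object. In particular, `c` is injective if and
only if `η_c` is an isomorphism. -/
theorem unit_injectiveEnvelope
    {C : Type*} [Category C] {X : Type*} [Category X]
    [HasFiniteLimits C] [HasFiniteLimits X]
    [HasFiniteColimits C] [HasFiniteColimits X]
    (F : C ⥤ X) (G : X ⥤ C) (H : X ⥤ C)
    (adj : F ⊣ G) [PreservesFiniteLimits F] [F.Faithful] [G.Full] [G.Faithful]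
    (adj' : H ⊣ F)
    (hsplit : ∀ ⦃A B : X⦄ (f : A ⟶ B), Mono f → IsSplitMono f)
    (c : C) :
    IsEssentialMono (adj.unit.app c) ∧ Injective (G.obj (F.obj c)) ∧
      (Injective c ↔ IsIso (adj.unit.app c)) := by
  -- the counit is an isomorphism since G is fully faithful
  have hc : IsIso (adj.counit.app (F.obj c)) := inferInstance
  -- hence F.map (η.app c) is an isomorphism, by the triangle identity
  have hFη : IsIso (F.map (adj.unit.app c)) := by
    have := adj.left_triangle_components c
    exact ⟨adj.counit.app (F.obj c), this, by
      rw [← cancel_mono (adj.counit.app (F.obj c)), Category.assoc, this]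
      simp⟩
  -- η.app c is a mono, since F is faithful and F (η c) is iso
  have hmono : Mono (adj.unit.app c) := by
    constructor
    intro Z a b h
    apply F.map_injective
    have : F.map a ≫ F.map (adj.unit.app c) = F.map b ≫ F.map (adj.unit.app c) := by
      rw [← F.map_comp, ← F.map_comp, h]
    exact (cancel_mono (F.map (adj.unit.app c))).1 this
  have hess : IsEssentialMono (adj.unit.app c) := by
    refine ⟨hmono, fun B f hf => ?_⟩
    have : Mono (F.map (adj.unit.app c ≫ f)) := inferInstance
    rw [F.map_comp] at this
    have hFf : Mono (F.map f) := by
      haveI := this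
      have heq : F.map f =
          inv (F.map (adj.unit.app c)) ≫ (F.map (adj.unit.app c) ≫ F.map f) := by simp
      rw [heq]
      infer_instance
    exact F.mono_of_mono_map hFf
  have hinj : Injective (G.obj (F.obj c)) := by
    constructor
    intro A B u g hg
    have hFg : Mono (F.map g) := inferInstance
    haveI := hsplit (F.map g) hFg
    refine ⟨(adj.homEquiv B (F.obj c)) (retraction (F.map g) ≫ (adj.homEquiv A (F.obj c)).symm u),
      ?_⟩
    rw [← Adjunction.homEquiv_naturality_left, ← Category.assoc, IsSplitMono.id,
      Category.id_comp, Equiv.apply_symm_apply]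
  refine ⟨hess, hinj, ?_, fun h => ?_⟩
  · intro hic
    haveI := hmono
    obtain ⟨r, hr⟩ := @Injective.factors _ _ _ hic _ _ (𝟙 c) (adj.unit.app c) hmono
    have hrm : Mono r := hess.2 r (by rw [hr]; exact ⟨fun _ _ h => by simpa using h⟩)
    have : IsSplitEpi r := ⟨⟨⟨adj.unit.app c, hr⟩⟩⟩
    have : IsIso r := isIso_of_mono_of_isSplitEpi r
    exact ⟨r, hr, by rw [← cancel_mono r, Category.assoc, hr]; simp⟩
  · exact Injective.of_iso (asIso (adj.unit.app c)).symm hinj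
end

section
/- Let F : C ⥤ X be a faithful essential localization with left adjoint H and counit θ of the adjunction H ⊣ F, and assume that every epimorphism in X is split. Then for every object C of C, the counit component θ_C : HF(C) ⟶ C is a projective cover of C: θ_C is an essential epimorphism and HF(C) is a projective object of C. In particular, C is a projective object if and only if θ_C is an isomorphism. -/
open CategoryTheory Limits

/-- A morphism `e` is an essential epimorphism if it is an epimorphism and every
morphism `f` such that `f ≫ e` is an epimorphism is itself an epimorphism. -/
def IsEssentialEpi {C : Type*} [CategoryTheory.Category C] {A B : C} (e : A ⟶ B) : Prop :=
  CategoryTheory.Epi e ∧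
    ∀ ⦃Z : C⦄ (f : Z ⟶ A), CategoryTheory.Epi (f ≫ e) → CategoryTheory.Epi f

/-!
The unit of `H ⊣ F` is invertible because `G` is fully faithful (adjoint triple `H ⊣ F ⊣ G`),
so `F` inverts `θ_c` by the triangle identity. Since `F` is faithful and preserves epimorphisms,
any morphism inverted by `F` is an essential epimorphism. All objects of `X` are projective, and
the left adjoint `H` of the epimorphism-preserving `F` preserves projectives, so `HF(c)` is
projective. Finally, an essential epimorphism onto a projective object has a section which is
again an essential epimorphism, hence an isomorphism.
-/

section

variable {C D : Type*} [Category C] [Category D]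

theorem isEssentialEpi_of_isIso_map (F : C ⥤ D) [F.PreservesEpimorphisms] [F.Faithful]
    {A B : C} (e : A ⟶ B) [IsIso (F.map e)] : IsEssentialEpi e := by
  refine ⟨F.epi_of_epi_map inferInstance, fun _ f _ => F.epi_of_epi_map ?_⟩
  have hFfe : Epi (F.map f ≫ F.map e) := F.map_comp f e ▸ F.map_epi (f ≫ e)
  exact (epi_comp_iff_of_isIso _ _).mp hFfe

theorem IsEssentialEpi.isIso_of_projective {P B : C} {e : P ⟶ B} (he : IsEssentialEpi e)
    [Projective B] : IsIso e := by
  have := he.1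
  obtain ⟨s, hs⟩ := Projective.factors (𝟙 B) e
  have : Epi s := he.2 s (by rw [hs]; infer_instance)
  have : IsSplitMono s := IsSplitMono.mk' ⟨e, hs⟩
  have : IsIso s := isIso_of_epi_of_isSplitMono s
  rw [← IsIso.inv_eq_of_hom_inv_id hs]
  infer_instance

theorem projective_of_forall_isSplitEpi
    (hsplit : ∀ ⦃A B : C⦄ (f : A ⟶ B), Epi f → IsSplitEpi f) (P : C) : Projective P where
  factors f e he := ⟨f ≫ (hsplit e he).exists_splitEpi.some.section_, by
    rw [Category.assoc, (hsplit e he).exists_splitEpi.some.id, Category.comp_id]⟩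

end

theorem counit_projectiveCover_general
    {C : Type*} [Category C] {X : Type*} [Category X]
    (F : C ⥤ X) (G : X ⥤ C) (H : X ⥤ C)
    (adj : F ⊣ G) [F.Faithful] [G.Full] [G.Faithful]
    (adj' : H ⊣ F)
    (hsplit : ∀ ⦃A B : X⦄ (f : A ⟶ B), Epi f → IsSplitEpi f)
    (c : C) :
    IsEssentialEpi (adj'.counit.app c) ∧ Projective (H.obj (F.obj c)) ∧
      (Projective c ↔ IsIso (adj'.counit.app c)) := by
  have : F.IsLeftAdjoint := adj.isLeftAdjoint
  have hH : H.FullyFaithful :=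
    (Adjunction.Triple.mk adj' adj).fullyFaithfulEquiv.symm (.ofFullyFaithful G)
  have := hH.full
  have := hH.faithful
  have hess := isEssentialEpi_of_isIso_map F (adj'.counit.app c)
  have hproj := adj'.map_projective _ (projective_of_forall_isSplitEpi hsplit (F.obj c))
  exact ⟨hess, hproj, fun _ => hess.isIso_of_projective,
    fun _ => Projective.of_iso (asIso (adj'.counit.app c)) hproj⟩

/-- Let `F : C ⥤ X` be a faithful essential localization with left adjoint `H` and
counit `θ` of the adjunction `H ⊣ F`, and assume that every epimorphism in `X` is split.
Then for every object `c` of `C`, the counit component `θ_c : HF(c) ⟶ c` is a projective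
cover of `c`: it is an essential epimorphism from a projective object. In particular,
`c` is projective if and only if `θ_c` is an isomorphism. -/
theorem counit_projectiveCover
    {C : Type*} [Category C] {X : Type*} [Category X]
    [HasFiniteLimits C] [HasFiniteLimits X]
    [HasFiniteColimits C] [HasFiniteColimits X]
    (F : C ⥤ X) (G : X ⥤ C) (H : X ⥤ C)
    (adj : F ⊣ G) [PreservesFiniteLimits F] [F.Faithful] [G.Full] [G.Faithful]
    (adj' : H ⊣ F)
    (hsplit : ∀ ⦃A B : X⦄ (f : A ⟶ B), Epi f → IsSplitEpi f)
    (c : C) :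
    IsEssentialEpi (adj'.counit.app c) ∧ Projective (H.obj (F.obj c)) ∧
      (Projective c ↔ IsIso (adj'.counit.app c)) :=
  counit_projectiveCover_general F G H adj adj' hsplit c
end
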